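/- Fix i and dimensions m_j for j = 1,…,i, and set m = m₁m₂⋯m_i. Let A_j be invertible m_j×m_j real matrices, K the multiway Kronecker product matrix with entries K(q,r) = ∏_j (A_j)_{q_j r_j}, and M̃ ∈ (∏_j Fin m_j) → ℝ a constant array. Let Z̃ have the array variate standard normal law, i.e., the product over all coordinates of the standard Gaussian measure N(0,1) on ℝ, whose density is z ↦ exp(−‖z‖²/2)/(2π)^{m/2} where ‖z‖² = ∑_r z(r)². Then the law of X̃ = K *ᵥ Z̃ + M̃ has density with respect to Lebesgue measure x ↦ exp(−‖K⁻¹ *ᵥ (x − M̃)‖²/2) / ((2π)^{m/2} ∏_{j=1}^{i} |det A_j|^{∏_{k≠j} m_k}). -/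

import Mathlib

open Matrix MeasureTheory Real Kronecker
open scoped ENNReal

/-!
The affine map `z ↦ K *ᵥ z + M` pushes Lebesgue measure forward to `|det K|⁻¹ • volume`, so it
turns a density `f` into `x ↦ |det K|⁻¹ * f (K⁻¹ *ᵥ (x - M))`. It remains to compute `det K`:
over `Fin (i + 1)` the multiway Kronecker product is, up to reindexing, `A 0 ⊗ₖ K'` with `K'` the
product of the remaining factors, and `det (A ⊗ₖ B) = det A ^ card * det B ^ card` gives
`det K = ∏ j, det (A j) ^ ∏ k ≠ j, m k` by induction on `i`.
-/

/-- The multiway Kronecker product of the square matrices `A j : Matrix (Fin (m j)) (Fin (m j)) ℝ`,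
`j = 1, …, i`: the square matrix indexed by `∀ j, Fin (m j)` with entries
`K(q, r) = ∏ j, (A j)_{q_j r_j}`. -/
def multiwayKron {i : ℕ} {m : Fin i → ℕ}
    (A : ∀ j, Matrix (Fin (m j)) (Fin (m j)) ℝ) :
    Matrix (∀ j, Fin (m j)) (∀ j, Fin (m j)) ℝ :=
  Matrix.of fun q r => ∏ j, A j (q j) (r j)

namespace Fin

variable {M : Type*} [CommMonoid M] {n : ℕ}

theorem univ_erase_zero : (Finset.univ : Finset (Fin (n + 1))).erase 0 =
    Finset.univ.image succ := by
  rw [image_succ_univ, Finset.compl_eq_univ_sdiff, Finset.sdiff_singleton_eq_erase]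

theorem prod_univ_erase_zero (f : Fin (n + 1) → M) :
    ∏ k ∈ Finset.univ.erase 0, f k = ∏ k : Fin n, f k.succ := by
  rw [univ_erase_zero, Finset.prod_image (succ_injective n).injOn]

theorem prod_univ_erase_succ (f : Fin (n + 1) → M) (j : Fin n) :
    ∏ k ∈ Finset.univ.erase j.succ, f k = f 0 * ∏ k ∈ Finset.univ.erase j, f k.succ := by
  rw [← Finset.mul_prod_erase _ _ (Finset.mem_erase.2 ⟨(succ_ne_zero j).symm, Finset.mem_univ _⟩),
    Finset.erase_right_comm, univ_erase_zero, ← Finset.image_erase (succ_injective n),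
    Finset.prod_image (succ_injective n).injOn]

end Fin

theorem MeasurableEquiv.map_withDensity {α β : Type*} [MeasurableSpace α] [MeasurableSpace β]
    (e : α ≃ᵐ β) (μ : Measure α) (f : α → ℝ≥0∞) :
    (μ.withDensity f).map e = (μ.map e).withDensity (f ∘ e.symm) := by
  ext s hs
  rw [e.map_apply, withDensity_apply _ (e.measurable hs), withDensity_apply _ hs, e.restrict_map,
    lintegral_map_equiv]
  simp

theorem multiwayKron_succ {i : ℕ} {m : Fin (i + 1) → ℕ}
    (A : ∀ j, Matrix (Fin (m j)) (Fin (m j)) ℝ) :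
    multiwayKron A = reindex (Fin.consEquiv fun j => Fin (m j)) (Fin.consEquiv _)
      (A 0 ⊗ₖ multiwayKron fun j : Fin i => A j.succ) := by
  ext q r
  simp [multiwayKron, Fin.consEquiv, kroneckerMap, Fin.prod_univ_succ, Fin.tail]

theorem det_multiwayKron {i : ℕ} {m : Fin i → ℕ} (A : ∀ j, Matrix (Fin (m j)) (Fin (m j)) ℝ) :
    (multiwayKron A).det = ∏ j, (A j).det ^ ∏ k ∈ Finset.univ.erase j, m k := by
  induction i with
  | zero => simp [multiwayKron, det_unique]
  | succ i ih =>
    rw [multiwayKron_succ, det_reindex_self, det_kronecker, ih, Fin.prod_univ_succ,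
      Fin.prod_univ_erase_zero, Fintype.card_pi]
    simp only [Fintype.card_fin, Fin.prod_univ_erase_succ, pow_mul, ← Finset.prod_pow]
    exact congrArg _ (Finset.prod_congr rfl fun j _ => pow_right_comm _ _ _)

theorem abs_det_multiwayKron {i : ℕ} {m : Fin i → ℕ}
    (A : ∀ j, Matrix (Fin (m j)) (Fin (m j)) ℝ) :
    |(multiwayKron A).det| = ∏ j, |(A j).det| ^ ∏ k ∈ Finset.univ.erase j, m k := by
  simp only [det_multiwayKron, Finset.abs_prod, abs_pow]

section Affine

variable {ι : Type*} [Fintype ι] [DecidableEq ι] {K : Matrix ι ι ℝ}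

theorem map_mulVec_add_volume (hK : K.det ≠ 0) (b : ι → ℝ) :
    volume.map (fun z => K *ᵥ z + b) = ENNReal.ofReal |K.det|⁻¹ • volume := by
  have hlin : (fun z => K *ᵥ z + b) = (· + b) ∘ ⇑(toLin' K) := rfl
  rw [hlin, ← Measure.map_map (measurable_add_const b) (by fun_prop),
    Real.map_matrix_volume_pi_eq_smul_volume_pi hK, Measure.map_smul, map_add_right_eq_self,
    abs_inv]

noncomputable def mulVecAddMeasurableEquiv (hK : IsUnit K.det) (b : ι → ℝ) :
    (ι → ℝ) ≃ᵐ (ι → ℝ) where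
  toFun z := K *ᵥ z + b
  invFun x := K⁻¹ *ᵥ (x - b)
  left_inv z := by simp [mulVec_mulVec, nonsing_inv_mul K hK]
  right_inv x := by simp [mulVec_mulVec, mul_nonsing_inv K hK]
  measurable_toFun := show Measurable fun z => K *ᵥ z + b by fun_prop
  measurable_invFun := show Measurable fun x => K⁻¹ *ᵥ (x - b) by fun_prop

theorem map_withDensity_mulVec_add (hK : K.det ≠ 0) (b : ι → ℝ) (f : (ι → ℝ) → ℝ≥0∞) :
    (volume.withDensity f).map (fun z => K *ᵥ z + b) =
      volume.withDensity fun x => ENNReal.ofReal |K.det|⁻¹ * f (K⁻¹ *ᵥ (x - b)) := by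
  let e := mulVecAddMeasurableEquiv (isUnit_iff_ne_zero.2 hK) b
  rw [show (fun z => K *ᵥ z + b) = e from rfl, e.map_withDensity,
    show volume.map e = _ from map_mulVec_add_volume hK b,
    withDensity_smul_measure, ← withDensity_smul' _ _ ENNReal.ofReal_ne_top]
  rfl

end Affine

/-- If `Z̃` has the array variate standard normal law, with density
`z ↦ exp(−‖z‖²/2)/(2π)^{m/2}` where `m = m₁⋯m_i` and `‖z‖² = ∑ r, z(r)²`, then the law of
`X̃ = K *ᵥ Z̃ + M̃`, where `K` is the multiway Kronecker product of the invertible matrices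
`A j`, has Lebesgue density
`x ↦ exp(−‖K⁻¹ *ᵥ (x − M̃)‖²/2) / ((2π)^{m/2} ∏ j, |det (A j)|^{∏_{k ≠ j} m k})`. -/
theorem arrayVariate_normal_density {i : ℕ} {m : Fin i → ℕ}
    (A : ∀ j, Matrix (Fin (m j)) (Fin (m j)) ℝ) (hA : ∀ j, IsUnit (A j))
    (M : (∀ j, Fin (m j)) → ℝ) :
    (volume.withDensity fun z : (∀ j, Fin (m j)) → ℝ =>
          ENNReal.ofReal
            (Real.exp (-(∑ r, z r ^ 2) / 2) /
              (2 * π) ^ ((∏ j, m j : ℕ) / 2 : ℝ))).map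
        (fun z => multiwayKron A *ᵥ z + M) =
      volume.withDensity fun x =>
        ENNReal.ofReal
          (Real.exp (-(∑ r, ((multiwayKron A)⁻¹ *ᵥ (x - M)) r ^ 2) / 2) /
            ((2 * π) ^ ((∏ j, m j : ℕ) / 2 : ℝ) *
              ∏ j, |(A j).det| ^ ∏ k ∈ Finset.univ.erase j, m k)) := by
  have hdet : (multiwayKron A).det ≠ 0 := by
    rw [det_multiwayKron]
    exact Finset.prod_ne_zero_iff.2 fun j _ =>
      pow_ne_zero _ ((isUnit_iff_isUnit_det _).1 (hA j)).ne_zero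
  rw [map_withDensity_mulVec_add hdet]
  congr with x
  rw [← ENNReal.ofReal_mul (inv_nonneg.2 (abs_nonneg _)), abs_det_multiwayKron]
  congr 1
  ring
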